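/- Let g ≥ 1 and let 𝔟_1,…,𝔟_k ≥ 1 be integers with g = 𝔟_1+⋯+𝔟_k; set m_l = 𝔟_1+⋯+𝔟_{l−1}. Let W = (ℤ/2ℤ)^g ⋊ S_g be the hyperoctahedral group, where S_g acts by permuting coordinates. Let H ≤ W be the Young subgroup S_{𝔟_1} × ⋯ × S_{𝔟_k} ⊆ S_g (permutations preserving each block {m_l+1,…,m_l+𝔟_l}, with trivial sign component), and let X ≤ W be the subgroup generated by S_g together with the central element δ = (1,1,…,1) ∈ (ℤ/2ℤ)^g (the all-sign-flip element). For a tuple c = (c_1,…,c_k) with 0 ≤ c_l ≤ 𝔟_l, let w(c) ∈ (ℤ/2ℤ)^g ⊂ W be the element whose l-th block has entry 0 in its first c_l positions and entry 1 in its last 𝔟_l − c_l positions. Then the assignment c ↦ H·w(c)·X induces a bijection from the set of tuples {(c_1,…,c_k) : 0 ≤ c_l ≤ 𝔟_l} modulo the equivalence (c_1,…,c_k) ∼ (𝔟_1−c_1,…,𝔟_k−c_k) onto the set of double cosets H∖W/X. -/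

import Mathlib

open scoped Classical

/-- The sign part `(ℤ/2ℤ)^g` of the hyperoctahedral group, written multiplicatively. -/
abbrev SgnVec (g : ℕ) := Fin g → Multiplicative (ZMod 2)

/-- The action of `S_g` on `(ℤ/2ℤ)^g` by permuting coordinates, as a homomorphism to
the automorphism group. -/
def permAction (g : ℕ) : Equiv.Perm (Fin g) →* MulAut (SgnVec g) where
  toFun σ := MulEquiv.arrowCongr σ (MulEquiv.refl (Multiplicative (ZMod 2)))
  map_one' := rfl
  map_mul' _ _ := rfl

/-- The hyperoctahedral group `W = (ℤ/2ℤ)^g ⋊ S_g`. -/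
abbrev HyperOct (g : ℕ) := SgnVec g ⋊[permAction g] Equiv.Perm (Fin g)

/-!
Since `S_g ⊆ X`, the double coset of `w` depends only on its sign vector `ε`, and two sign
vectors give the same double coset exactly when one is carried to the other by a
block-preserving permutation, possibly followed by the global flip `δ`. Permutations within a
block realise every rearrangement of its entries, so the orbit of `ε` is determined by the
numbers `n_l` of unflipped entries in the blocks, and `δ` replaces each `n_l` by `𝔟_l - n_l`.
For `w(c)` these numbers are the `c_l`.
-/

open Finset

section SignVectors

variable {g : ℕ}

lemma ZModTwo.mul_self_eq_one (v : Multiplicative (ZMod 2)) : v * v = 1 := by decide +revert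

lemma ZModTwo.eq_ofAdd_one_iff_ne_one (v : Multiplicative (ZMod 2)) :
    v = Multiplicative.ofAdd 1 ↔ v ≠ 1 := by decide +revert

lemma ZModTwo.mul_ofAdd_one_eq_one_iff (v : Multiplicative (ZMod 2)) :
    v * Multiplicative.ofAdd 1 = 1 ↔ v ≠ 1 := by decide +revert

lemma ZModTwo.eq_one_or_eq_ofAdd_one (v : Multiplicative (ZMod 2)) :
    v = 1 ∨ v = Multiplicative.ofAdd 1 := by decide +revert

def flipAll (g : ℕ) : SgnVec g := fun _ => Multiplicative.ofAdd 1

lemma permAction_apply (σ : Equiv.Perm (Fin g)) (ε : SgnVec g) (i : Fin g) :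
    permAction g σ ε i = ε (σ⁻¹ i) := rfl

lemma permAction_flipAll (σ : Equiv.Perm (Fin g)) : permAction g σ (flipAll g) = flipAll g := rfl

lemma flipAll_mul_self : flipAll g * flipAll g = 1 := funext fun _ => ZModTwo.mul_self_eq_one _

end SignVectors

/-- `Ω_ℝ(GSp_{2g})`. -/
def realWeyl (g : ℕ) : Subgroup (HyperOct g) :=
  Subgroup.closure ({w : HyperOct g | w.left = 1} ∪ {⟨flipAll g, 1⟩})

lemma mem_realWeyl_iff {g : ℕ} (x : HyperOct g) :
    x ∈ realWeyl g ↔ x.left = 1 ∨ x.left = flipAll g := by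
  constructor
  · intro hx
    induction hx using Subgroup.closure_induction with
    | mem y hy =>
      rcases hy with hy | rfl
      · exact Or.inl hy
      · exact Or.inr rfl
    | one => exact Or.inl rfl
    | mul y z _ _ hy hz =>
      rw [SemidirectProduct.mul_left]
      rcases hy with hy | hy <;> rcases hz with hz | hz <;>
        simp [hy, hz, permAction_flipAll, flipAll_mul_self]
    | inv y _ hy =>
      rw [SemidirectProduct.inv_left]
      rcases hy with hy | hy
      · simp [hy]
      · right
        rw [hy, inv_eq_of_mul_eq_one_right flipAll_mul_self, permAction_flipAll]
  · rintro (hx | hx)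
    · exact Subgroup.subset_closure (Or.inl hx)
    · have hdecomp : x = ⟨flipAll g, 1⟩ * ⟨1, x.right⟩ := by
        ext i
        · simp [hx]
        · simp
      rw [hdecomp]
      exact mul_mem (Subgroup.subset_closure (Or.inr rfl)) (Subgroup.subset_closure (Or.inl rfl))

def youngSubgroup {g : ℕ} {β : Type*} (B : Fin g → β) : Subgroup (HyperOct g) where
  carrier := {w | w.left = 1 ∧ ∀ i, B (w.right i) = B i}
  mul_mem' := by
    rintro a b ⟨ha, ha'⟩ ⟨hb, hb'⟩
    refine ⟨?_, fun i => ?_⟩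
    · rw [SemidirectProduct.mul_left, ha, hb, map_one, one_mul]
    · rw [SemidirectProduct.mul_right, Equiv.Perm.mul_apply, ha', hb']
  one_mem' := ⟨rfl, fun _ => rfl⟩
  inv_mem' := by
    rintro a ⟨ha, ha'⟩
    refine ⟨?_, fun i => ?_⟩
    · rw [SemidirectProduct.inv_left, ha, inv_one, map_one]
    · rw [SemidirectProduct.inv_right, ← ha' (a.right⁻¹ i), Equiv.Perm.coe_inv,
        Equiv.apply_symm_apply]

section DoubleCosets

variable {g : ℕ} {β : Type*} (B : Fin g → β)

lemma doubleCosetMk_eq_mk_left (w : HyperOct g) :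
    DoubleCoset.mk (youngSubgroup B) (realWeyl g) w =
      DoubleCoset.mk (youngSubgroup B) (realWeyl g) ⟨w.left, 1⟩ := by
  refine (DoubleCoset.eq _ _ _ _).2
    ⟨1, one_mem _, ⟨1, w.right⁻¹⟩, (mem_realWeyl_iff _).2 (Or.inl rfl), ?_⟩
  ext i <;> simp

lemma doubleCosetMk_eq_iff_exists_perm (ε ε' : SgnVec g) :
    DoubleCoset.mk (youngSubgroup B) (realWeyl g) ⟨ε, 1⟩ =
        DoubleCoset.mk (youngSubgroup B) (realWeyl g) ⟨ε', 1⟩ ↔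
      ∃ e, (e = 1 ∨ e = flipAll g) ∧
        ∃ τ : Equiv.Perm (Fin g), ∀ i, B (τ i) = B i ∧ (ε * e) (τ i) = ε' i := by
  rw [DoubleCoset.eq]
  constructor
  · rintro ⟨h, ⟨hl, hr⟩, x, hx, heq⟩
    have hx' := (mem_realWeyl_iff x).1 hx
    have hfix : ∀ σ, permAction g σ x.left = x.left := by
      intro σ
      rcases hx' with h | h <;> simp [h, permAction_flipAll]
    refine ⟨x.left, hx', h.right⁻¹, fun i => ⟨?_, ?_⟩⟩
    · rw [← hr (h.right⁻¹ i), Equiv.Perm.coe_inv, Equiv.apply_symm_apply]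
    · have hi := congrArg (fun w => w.left i) heq
      simp only [SemidirectProduct.mul_left, SemidirectProduct.mul_right, hl, one_mul,
        mul_one, hfix, Pi.mul_apply, permAction_apply] at hi
      rw [hi, Pi.mul_apply, ← permAction_apply h.right x.left, hfix]
  · rintro ⟨e, he, τ, hτ⟩
    refine ⟨⟨1, τ⁻¹⟩, ⟨rfl, fun i => ?_⟩, ⟨e, τ⟩, (mem_realWeyl_iff _).2 he, ?_⟩
    · rw [← (hτ (τ⁻¹ i)).1, Equiv.Perm.coe_inv, Equiv.apply_symm_apply]
    · refine SemidirectProduct.ext (funext fun i => ?_) (by simp)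
      simp only [SemidirectProduct.mul_left, SemidirectProduct.mul_right, one_mul, mul_one,
        Pi.mul_apply, permAction_apply, inv_inv]
      exact (hτ i).2.symm

end DoubleCosets

lemma exists_perm_comp_eq_iff_card_fiber_eq {α γ : Type*} [Fintype α] (f f' : α → γ) :
    (∃ σ : Equiv.Perm α, ∀ a, f (σ a) = f' a) ↔ ∀ c, #{a | f a = c} = #{a | f' a = c} := by
  constructor
  · rintro ⟨σ, hσ⟩ c
    rw [← Fintype.card_subtype, ← Fintype.card_subtype]
    exact Fintype.card_congr (σ.subtypeEquiv fun a => by rw [hσ]).symm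
  · intro h
    have e : ∀ c, { a // f' a = c } ≃ { a // f a = c } := fun c =>
      Fintype.equivOfCardEq (by simp only [Fintype.card_subtype]; exact (h c).symm)
    exact ⟨Equiv.ofFiberEquiv e, Equiv.ofFiberEquiv_map e⟩

section PlusCount

variable {g : ℕ} {β : Type*} [DecidableEq β] (B : Fin g → β)

def plusCount (ε : SgnVec g) (l : β) : ℕ := #{i | B i = l ∧ ε i = 1}

lemma plusCount_le (ε : SgnVec g) (l : β) : plusCount B ε l ≤ #{i | B i = l} :=
  card_le_card fun i => by simp only [mem_filter, mem_univ, true_and]; exact And.left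

lemma card_filter_ne_one (ε : SgnVec g) (l : β) :
    #{i | B i = l ∧ ε i ≠ 1} = #{i | B i = l} - plusCount B ε l := by
  have h := card_filter_add_card_filter_not (s := {i | B i = l}) (fun i => ε i = 1)
  rw [filter_filter, filter_filter] at h
  rw [plusCount, ← h]
  simp only [ne_eq, add_tsub_cancel_left]

lemma plusCount_mul_flipAll (ε : SgnVec g) (l : β) :
    plusCount B (ε * flipAll g) l = #{i | B i = l} - plusCount B ε l := by
  rw [← card_filter_ne_one, plusCount]
  simp only [Pi.mul_apply, flipAll, ZModTwo.mul_ofAdd_one_eq_one_iff]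

lemma exists_blockPerm_iff_plusCount_eq (ε ε' : SgnVec g) :
    (∃ τ : Equiv.Perm (Fin g), ∀ i, B (τ i) = B i ∧ ε (τ i) = ε' i) ↔
      ∀ l, plusCount B ε l = plusCount B ε' l := by
  simp only [← Prod.mk.injEq]
  rw [exists_perm_comp_eq_iff_card_fiber_eq (fun i => (B i, ε i)) (fun i => (B i, ε' i))]
  simp only [Prod.forall, Prod.mk.injEq]
  constructor
  · intro h l
    exact h l 1
  · intro h l v
    rcases ZModTwo.eq_one_or_eq_ofAdd_one v with rfl | rfl
    · exact h l
    · simp only [ZModTwo.eq_ofAdd_one_iff_ne_one, card_filter_ne_one, h l]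

lemma doubleCosetMk_eq_iff_plusCount (ε ε' : SgnVec g) :
    DoubleCoset.mk (youngSubgroup B) (realWeyl g) ⟨ε, 1⟩ =
        DoubleCoset.mk (youngSubgroup B) (realWeyl g) ⟨ε', 1⟩ ↔
      (∀ l, plusCount B ε l = plusCount B ε' l) ∨
        ∀ l, plusCount B ε l + plusCount B ε' l = #{i | B i = l} := by
  simp only [doubleCosetMk_eq_iff_exists_perm, exists_blockPerm_iff_plusCount_eq]
  constructor
  · rintro ⟨e, rfl | rfl, h⟩
    · exact Or.inl (by simpa using h)
    · refine Or.inr fun l => ?_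
      have hl := h l
      rw [plusCount_mul_flipAll] at hl
      have := plusCount_le B ε l
      omega
  · rintro (h | h)
    · exact ⟨1, Or.inl rfl, by simpa using h⟩
    · refine ⟨flipAll g, Or.inr rfl, fun l => ?_⟩
      rw [plusCount_mul_flipAll]
      have := h l
      omega

end PlusCount

section Blocks

variable (𝔟 : ℕ → ℕ) (k : ℕ)

def blockStart (l : ℕ) : ℕ := ∑ t ∈ Ico 1 l, 𝔟 t

/-- Taking the greatest `l` with `blockStart 𝔟 l ≤ i` skips empty blocks. -/
noncomputable def blockIndex (i : ℕ) : ℕ := Nat.findGreatest (fun l => blockStart 𝔟 l ≤ i) k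

variable {𝔟 k}

lemma blockStart_succ {l : ℕ} (hl : 1 ≤ l) : blockStart 𝔟 (l + 1) = blockStart 𝔟 l + 𝔟 l :=
  sum_Ico_succ_top hl _

lemma blockStart_add_le {l l' : ℕ} (hl : 1 ≤ l) (h : l < l') :
    blockStart 𝔟 l + 𝔟 l ≤ blockStart 𝔟 l' := by
  rw [← blockStart_succ hl]
  exact sum_le_sum_of_subset (Ico_subset_Ico le_rfl h)

lemma blockIndex_spec {i : ℕ} (hi : i < blockStart 𝔟 (k + 1)) :
    1 ≤ blockIndex 𝔟 k i ∧ blockIndex 𝔟 k i ≤ k ∧ blockStart 𝔟 (blockIndex 𝔟 k i) ≤ i ∧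
      i < blockStart 𝔟 (blockIndex 𝔟 k i) + 𝔟 (blockIndex 𝔟 k i) := by
  have hk : 1 ≤ k := by
    by_contra! hk
    interval_cases k
    simp [blockStart] at hi
  have hstart : blockStart 𝔟 1 ≤ i := by simp [blockStart]
  unfold blockIndex
  have hle := Nat.findGreatest_le (P := fun l => blockStart 𝔟 l ≤ i) k
  refine ⟨Nat.le_findGreatest hk hstart, hle,
    Nat.findGreatest_spec (P := fun l => blockStart 𝔟 l ≤ i) hk hstart, ?_⟩
  rcases hle.lt_or_eq with hlt | heq
  · have := Nat.findGreatest_is_greatest (Nat.lt_succ_self _) hlt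
    rw [blockStart_succ (Nat.le_findGreatest hk hstart)] at this
    omega
  · rw [heq, ← blockStart_succ hk]
    exact hi

lemma blockIndex_eq_iff {i l : ℕ} (hi : i < blockStart 𝔟 (k + 1)) (hl : l ∈ Icc 1 k) :
    blockIndex 𝔟 k i = l ↔ blockStart 𝔟 l ≤ i ∧ i < blockStart 𝔟 l + 𝔟 l := by
  obtain ⟨h1, h2, h3, h4⟩ := blockIndex_spec hi
  rw [mem_Icc] at hl
  constructor
  · rintro rfl
    exact ⟨h3, h4⟩
  · rintro ⟨h5, h6⟩
    rcases lt_trichotomy (blockIndex 𝔟 k i) l with h | h | h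
    · have := blockStart_add_le (𝔟 := 𝔟) h1 h
      omega
    · exact h
    · have := blockStart_add_le (𝔟 := 𝔟) hl.1 h
      omega

end Blocks

lemma card_fin_filter_le_lt {g : ℕ} (a b : ℕ) (hb : b ≤ g) :
    #{i : Fin g | a ≤ (i : ℕ) ∧ (i : ℕ) < b} = b - a := by
  rw [← Nat.card_Ico, ← card_map Fin.valEmbedding]
  congr 1
  ext x
  simp only [mem_map, mem_filter, mem_univ, true_and, Fin.valEmbedding_apply, mem_Ico]
  constructor
  · rintro ⟨i, hi, rfl⟩
    exact hi
  · intro hx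
    exact ⟨⟨x, by omega⟩, hx, rfl⟩

section BlocksOfFin

variable {𝔟 : ℕ → ℕ} {k g : ℕ} (hg : blockStart 𝔟 (k + 1) = g)
include hg

lemma val_lt_blockStart (i : Fin g) : (i : ℕ) < blockStart 𝔟 (k + 1) := hg ▸ i.2

lemma blockIndex_mem_Icc (i : Fin g) : blockIndex 𝔟 k i ∈ Icc 1 k := by
  obtain ⟨h1, h2, -⟩ := blockIndex_spec (val_lt_blockStart hg i)
  exact mem_Icc.2 ⟨h1, h2⟩

lemma blockStart_add_le_of_mem_Icc {l : ℕ} (hl : l ∈ Icc 1 k) : blockStart 𝔟 l + 𝔟 l ≤ g := by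
  rw [mem_Icc] at hl
  rw [← hg]
  exact blockStart_add_le hl.1 (by omega)

lemma card_blockIndex_eq {l : ℕ} (hl : l ∈ Icc 1 k) :
    #{i : Fin g | blockIndex 𝔟 k i = l} = 𝔟 l := by
  simp_rw [blockIndex_eq_iff (val_lt_blockStart hg _) hl]
  rw [card_fin_filter_le_lt _ _ (blockStart_add_le_of_mem_Icc hg hl)]
  omega

lemma card_blockIndex_eq_zero {l : ℕ} (hl : l ∉ Icc 1 k) :
    #{i : Fin g | blockIndex 𝔟 k i = l} = 0 :=
  card_eq_zero.2 (filter_eq_empty_iff.2 fun i _ h => hl (h ▸ blockIndex_mem_Icc hg i))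

lemma youngSubgroup_blockIndex :
    (youngSubgroup (fun i : Fin g => blockIndex 𝔟 k i) : Set (HyperOct g)) =
      {w | w.left = 1 ∧ ∀ l ∈ Icc 1 k, ∀ i : Fin g,
        (blockStart 𝔟 l ≤ (i : ℕ) ∧ (i : ℕ) < blockStart 𝔟 l + 𝔟 l) →
          (blockStart 𝔟 l ≤ (w.right i : ℕ) ∧ (w.right i : ℕ) < blockStart 𝔟 l + 𝔟 l)} := by
  ext w
  refine and_congr_right fun _ => ⟨fun h l hl i hi => ?_, fun h i => ?_⟩
  · rw [← blockIndex_eq_iff (val_lt_blockStart hg _) hl] at hi ⊢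
    exact (h i).trans hi
  · have hi := blockIndex_mem_Icc hg i
    exact (blockIndex_eq_iff (val_lt_blockStart hg _) hi).2
      (h _ hi i ((blockIndex_eq_iff (val_lt_blockStart hg _) hi).1 rfl))

lemma doubleCosetMk_eq_iff_plusCount_blockIndex (ε ε' : SgnVec g) :
    DoubleCoset.mk (youngSubgroup (fun i : Fin g => blockIndex 𝔟 k i)) (realWeyl g) ⟨ε, 1⟩ =
        DoubleCoset.mk (youngSubgroup (fun i : Fin g => blockIndex 𝔟 k i)) (realWeyl g)
          ⟨ε', 1⟩ ↔
      (∀ l ∈ Icc 1 k, plusCount (fun i : Fin g => blockIndex 𝔟 k i) ε l =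
          plusCount (fun i : Fin g => blockIndex 𝔟 k i) ε' l) ∨
        ∀ l ∈ Icc 1 k, plusCount (fun i : Fin g => blockIndex 𝔟 k i) ε l +
          plusCount (fun i : Fin g => blockIndex 𝔟 k i) ε' l = 𝔟 l := by
  have hzero : ∀ ε l, l ∉ Icc 1 k → plusCount (fun i : Fin g => blockIndex 𝔟 k i) ε l = 0 :=
    fun ε l hl => Nat.eq_zero_of_le_zero
      ((plusCount_le _ ε l).trans (card_blockIndex_eq_zero hg hl).le)
  rw [doubleCosetMk_eq_iff_plusCount]
  refine or_congr ⟨fun h l _ => h l, fun h l => ?_⟩ ⟨fun h l hl => ?_, fun h l => ?_⟩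
  · by_cases hl : l ∈ Icc 1 k
    · exact h l hl
    · rw [hzero ε l hl, hzero ε' l hl]
  · rw [h l, card_blockIndex_eq hg hl]
  · by_cases hl : l ∈ Icc 1 k
    · rw [h l hl, card_blockIndex_eq hg hl]
    · rw [hzero ε l hl, hzero ε' l hl, card_blockIndex_eq_zero hg hl]

end BlocksOfFin

section BlockSigns

variable {𝔟 : ℕ → ℕ} {k g : ℕ}

/-- The sign part of `w(c)`. -/
noncomputable def blockSigns (𝔟 : ℕ → ℕ) (k : ℕ) (c : ℕ → ℕ) : SgnVec g := fun i =>
  if ∃ l, 1 ≤ l ∧ l ≤ k ∧ blockStart 𝔟 l ≤ (i : ℕ) ∧ (i : ℕ) < blockStart 𝔟 l + c l then 1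
  else Multiplicative.ofAdd (1 : ZMod 2)

variable (hg : blockStart 𝔟 (k + 1) = g) {c : ℕ → ℕ} (hc : ∀ l ∈ Icc 1 k, c l ≤ 𝔟 l)
include hg hc

lemma blockSigns_eq_one_iff (i : Fin g) :
    blockSigns 𝔟 k c i = 1 ↔
      (i : ℕ) < blockStart 𝔟 (blockIndex 𝔟 k i) + c (blockIndex 𝔟 k i) := by
  have hi := val_lt_blockStart hg i
  have hexists :
      (∃ l, 1 ≤ l ∧ l ≤ k ∧ blockStart 𝔟 l ≤ (i : ℕ) ∧ (i : ℕ) < blockStart 𝔟 l + c l) ↔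
        (i : ℕ) < blockStart 𝔟 (blockIndex 𝔟 k i) + c (blockIndex 𝔟 k i) := by
    constructor
    · rintro ⟨l, h1, h2, h3, h4⟩
      have hl : l ∈ Icc 1 k := mem_Icc.2 ⟨h1, h2⟩
      obtain rfl := (blockIndex_eq_iff hi hl).2 ⟨h3, by have := hc l hl; omega⟩
      exact h4
    · intro h
      obtain ⟨h1, h2, h3, -⟩ := blockIndex_spec hi
      exact ⟨_, h1, h2, h3, h⟩
  rw [blockSigns, ← hexists]
  split_ifs with h <;> simp [h]

lemma plusCount_blockSigns {l : ℕ} (hl : l ∈ Icc 1 k) :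
    plusCount (fun i : Fin g => blockIndex 𝔟 k i) (blockSigns 𝔟 k c) l = c l := by
  have hcl := hc l hl
  have hle := blockStart_add_le_of_mem_Icc hg hl
  calc plusCount (fun i : Fin g => blockIndex 𝔟 k i) (blockSigns 𝔟 k c) l
      = #{i : Fin g | blockStart 𝔟 l ≤ (i : ℕ) ∧ (i : ℕ) < blockStart 𝔟 l + c l} := by
        unfold plusCount
        congr 1
        ext i
        simp only [mem_filter, mem_univ, true_and, blockSigns_eq_one_iff hg hc]
        constructor
        · rintro ⟨rfl, h⟩
          exact ⟨(blockIndex_spec (val_lt_blockStart hg i)).2.2.1, h⟩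
        · rintro ⟨h1, h2⟩
          rw [(blockIndex_eq_iff (val_lt_blockStart hg i) hl).2 ⟨h1, by omega⟩]
          exact ⟨rfl, h2⟩
    _ = c l := by rw [card_fin_filter_le_lt _ _ (by omega)]; omega

end BlockSigns

theorem stmt_15_general (g k : ℕ) (𝔟 : ℕ → ℕ)
    (hsum : ∑ l ∈ Finset.Icc 1 k, 𝔟 l = g) :
    let m : ℕ → ℕ := fun l => ∑ t ∈ Finset.Ico 1 l, 𝔟 t
    let δ : SgnVec g := fun _ => Multiplicative.ofAdd (1 : ZMod 2)
    -- the Young subgroup `S_{𝔟_1} × ⋯ × S_{𝔟_k}` (trivial sign component,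
    -- permutation preserving each block)
    let H : Set (HyperOct g) := {w | w.left = 1 ∧ ∀ l ∈ Finset.Icc 1 k, ∀ i : Fin g,
      (m l ≤ (i : ℕ) ∧ (i : ℕ) < m l + 𝔟 l) →
        (m l ≤ (w.right i : ℕ) ∧ (w.right i : ℕ) < m l + 𝔟 l)}
    -- the subgroup generated by `S_g` and the all-sign-flip element `δ`
    let X : Set (HyperOct g) :=
      (Subgroup.closure ({w : HyperOct g | w.left = 1} ∪ {⟨δ, 1⟩}) : Subgroup (HyperOct g))
    -- the element `w(c)`
    let wc : (ℕ → ℕ) → HyperOct g := fun c =>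
      ⟨fun i => if ∃ l, 1 ≤ l ∧ l ≤ k ∧ m l ≤ (i : ℕ) ∧ (i : ℕ) < m l + c l then 1
        else Multiplicative.ofAdd (1 : ZMod 2), 1⟩
    -- the induced map to the double coset space `H \ W / X`
    let F : (ℕ → ℕ) → DoubleCoset.Quotient H X := fun c => Quotient.mk'' (wc c)
    -- surjectivity
    (∀ q : DoubleCoset.Quotient H X, ∃ c, (∀ l ∈ Finset.Icc 1 k, c l ≤ 𝔟 l) ∧ F c = q) ∧
    -- the fibers are exactly the equivalence classes of `(c_l) ∼ (𝔟_l - c_l)`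
    (∀ c c', (∀ l ∈ Finset.Icc 1 k, c l ≤ 𝔟 l) → (∀ l ∈ Finset.Icc 1 k, c' l ≤ 𝔟 l) →
      (F c = F c' ↔ ((∀ l ∈ Finset.Icc 1 k, c l = c' l) ∨
        (∀ l ∈ Finset.Icc 1 k, c l + c' l = 𝔟 l)))) := by
  intro m δ H X wc F
  have hg : blockStart 𝔟 (k + 1) = g := by rw [blockStart, Ico_add_one_right_eq_Icc, hsum]
  have hH : H = youngSubgroup (fun i : Fin g => blockIndex 𝔟 k i) :=
    (youngSubgroup_blockIndex hg).symm
  have hX : X = realWeyl g := rfl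
  have hF : ∀ c, F c = Quotient.mk'' (⟨blockSigns 𝔟 k c, 1⟩ : HyperOct g) := fun _ => rfl
  clear_value F X H
  subst hH hX
  change ∀ c, F c = DoubleCoset.mk _ _ _ at hF
  refine ⟨fun q => ?_, fun c c' hc hc' => ?_⟩
  · obtain ⟨w, rfl⟩ := Quotient.mk''_surjective q
    change ∃ c, _ ∧ F c = DoubleCoset.mk _ _ w
    have hc : ∀ l ∈ Icc 1 k, plusCount (fun i : Fin g => blockIndex 𝔟 k i) w.left l ≤ 𝔟 l :=
      fun l hl => card_blockIndex_eq hg hl ▸ plusCount_le _ _ _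
    refine ⟨_, hc, ?_⟩
    rw [hF, doubleCosetMk_eq_mk_left _ w, doubleCosetMk_eq_iff_plusCount_blockIndex hg]
    exact Or.inl fun l hl => plusCount_blockSigns hg hc hl
  · rw [hF, hF, doubleCosetMk_eq_iff_plusCount_blockIndex hg]
    refine or_congr (forall₂_congr fun l hl => ?_) (forall₂_congr fun l hl => ?_) <;>
      rw [plusCount_blockSigns hg hc hl, plusCount_blockSigns hg hc' hl]

theorem stmt_15 (g k : ℕ) (hg : 1 ≤ g) (hk : 1 ≤ k) (𝔟 : ℕ → ℕ)
    (h𝔟 : ∀ l ∈ Finset.Icc 1 k, 1 ≤ 𝔟 l) (hsum : ∑ l ∈ Finset.Icc 1 k, 𝔟 l = g) :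
    let m : ℕ → ℕ := fun l => ∑ t ∈ Finset.Ico 1 l, 𝔟 t
    let δ : SgnVec g := fun _ => Multiplicative.ofAdd (1 : ZMod 2)
    -- the Young subgroup `S_{𝔟_1} × ⋯ × S_{𝔟_k}` (trivial sign component,
    -- permutation preserving each block)
    let H : Set (HyperOct g) := {w | w.left = 1 ∧ ∀ l ∈ Finset.Icc 1 k, ∀ i : Fin g,
      (m l ≤ (i : ℕ) ∧ (i : ℕ) < m l + 𝔟 l) →
        (m l ≤ (w.right i : ℕ) ∧ (w.right i : ℕ) < m l + 𝔟 l)}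
    -- the subgroup generated by `S_g` and the all-sign-flip element `δ`
    let X : Set (HyperOct g) :=
      (Subgroup.closure ({w : HyperOct g | w.left = 1} ∪ {⟨δ, 1⟩}) : Subgroup (HyperOct g))
    -- the element `w(c)`
    let wc : (ℕ → ℕ) → HyperOct g := fun c =>
      ⟨fun i => if ∃ l, 1 ≤ l ∧ l ≤ k ∧ m l ≤ (i : ℕ) ∧ (i : ℕ) < m l + c l then 1
        else Multiplicative.ofAdd (1 : ZMod 2), 1⟩
    -- the induced map to the double coset space `H \ W / X`
    let F : (ℕ → ℕ) → DoubleCoset.Quotient H X := fun c => Quotient.mk'' (wc c)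
    -- surjectivity
    (∀ q : DoubleCoset.Quotient H X, ∃ c, (∀ l ∈ Finset.Icc 1 k, c l ≤ 𝔟 l) ∧ F c = q) ∧
    -- the fibers are exactly the equivalence classes of `(c_l) ∼ (𝔟_l - c_l)`
    (∀ c c', (∀ l ∈ Finset.Icc 1 k, c l ≤ 𝔟 l) → (∀ l ∈ Finset.Icc 1 k, c' l ≤ 𝔟 l) →
      (F c = F c' ↔ ((∀ l ∈ Finset.Icc 1 k, c l = c' l) ∨
        (∀ l ∈ Finset.Icc 1 k, c l + c' l = 𝔟 l)))) :=
  stmt_15_general g k 𝔟 hsum
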